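/- Let q ∈ (0,1], let n be a nonnegative integer, let real coefficients b^n_{ijk} be given for all nonnegative i, j, k with i + j + k = n, and let γ^n(u,v) = Σ_{i+j+k=n} b^n_{ijk} B^n_{ijk}(u,v). Define recursively, for 0 ≤ r ≤ n and all nonnegative i, j, k with i + j + k = n − r: f^{(0)}_{ijk} = b^n_{ijk} and f^{(r)}_{ijk} = q^k u · f^{(r−1)}_{i+1,j,k} + q^k v · f^{(r−1)}_{i,j+1,k} + (1 − q^k u − q^k v) · f^{(r−1)}_{i,j,k+1}. Then γ^n(u,v) = f^{(n)}_{000} for all real u, v. -/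

import Mathlib

/-!
Expanding [m+1 choose k]_q = [m choose k-1]_q + q^k [m choose k]_q and
C(i+j, i) = C(i+j-1, i-1) + C(i+j-1, i) gives the degree-raising recurrence
B^{m+1}_{ijk} = q^k u B^m_{i-1,j,k} + q^k v B^m_{i,j-1,k} + (1 - q^{k-1} u - q^{k-1} v) B^m_{i,j,k-1}.
Read backwards, it says that one de Casteljau step turns the coefficients of a degree m+1
patch into coefficients of degree m without changing its value at (u, v). After n steps only
the coefficient f^{(n)}_{000} of B^0_{000} = 1 remains.
-/

open Finset

/-- The q-integer [r] = 1 + q + ... + q^(r-1). -/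
noncomputable def qInt (q : ℝ) (r : ℕ) : ℝ := ∑ s ∈ Finset.range r, q ^ s

/-- The q-factorial [r]!. -/
noncomputable def qFact (q : ℝ) : ℕ → ℝ
  | 0 => 1
  | r + 1 => qInt q (r + 1) * qFact q r

/-- The q-binomial coefficient [i choose j]_q (zero unless i ≥ j ≥ 0). -/
noncomputable def qBinom (q : ℝ) (i j : ℕ) : ℝ :=
  if j ≤ i then qFact q i / (qFact q j * qFact q (i - j)) else 0

/-- The q-binomial coefficient with integer indices, zero unless i ≥ j ≥ 0. -/
noncomputable def qBinomZ (q : ℝ) (i j : ℤ) : ℝ :=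
  if 0 ≤ j ∧ j ≤ i then qFact q i.toNat / (qFact q j.toNat * qFact q (i - j).toNat) else 0

/-- The triangular q-Bernstein polynomial B^n_{ijk}(u,v)
    (meaningful for i + j + k = n). -/
noncomputable def triB (q : ℝ) (n i j k : ℕ) (u v : ℝ) : ℝ :=
  qBinom q n k * (Nat.choose (i + j) i : ℝ) * u ^ i * v ^ j *
    ∏ s ∈ Finset.range k, (1 - q ^ s * u - q ^ s * v)

/-- The triangular q-Bernstein polynomial with integer indices; by convention it is
    zero whenever any of the indices is negative. -/
noncomputable def triBZ (q : ℝ) (n : ℕ) (i j k : ℤ) (u v : ℝ) : ℝ :=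
  if 0 ≤ i ∧ 0 ≤ j ∧ 0 ≤ k then triB q n i.toNat j.toNat k.toNat u v else 0

/-- The classical triangular Bernstein polynomial b^n_{ijk}(u,v). -/
noncomputable def triBern (n i j k : ℕ) (u v : ℝ) : ℝ :=
  (Nat.factorial n : ℝ) /
      ((Nat.factorial i : ℝ) * (Nat.factorial j : ℝ) * (Nat.factorial k : ℝ)) *
    u ^ i * v ^ j * (1 - u - v) ^ k

/-- The set of triples (i, j, k) of nonnegative integers with i + j + k = n. -/
def simplex (n : ℕ) : Finset (ℕ × ℕ × ℕ) :=
  (Finset.range (n + 1) ×ˢ Finset.range (n + 1) ×ˢ Finset.range (n + 1)).filter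
    (fun p => p.1 + p.2.1 + p.2.2 = n)

lemma one_le_qInt_succ {q : ℝ} (hq : 0 ≤ q) (r : ℕ) : 1 ≤ qInt q (r + 1) := by
  rw [qInt, sum_range_succ']
  simp only [pow_zero, le_add_iff_nonneg_left]
  positivity

lemma qInt_succ_pos {q : ℝ} (hq : 0 ≤ q) (r : ℕ) : 0 < qInt q (r + 1) :=
  one_pos.trans_le (one_le_qInt_succ hq r)

lemma qFact_succ (q : ℝ) (r : ℕ) : qFact q (r + 1) = qInt q (r + 1) * qFact q r := rfl

lemma qFact_pos {q : ℝ} (hq : 0 ≤ q) : ∀ r, 0 < qFact q r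
  | 0 => one_pos
  | r + 1 => mul_pos (qInt_succ_pos hq r) (qFact_pos hq r)

lemma qInt_add (q : ℝ) (a b : ℕ) : qInt q (a + b) = qInt q a + q ^ a * qInt q b := by
  simp [qInt, sum_range_add, mul_sum, pow_add]

lemma qBinom_add_left (q : ℝ) (a b : ℕ) :
    qBinom q (a + b) a = qFact q (a + b) / (qFact q a * qFact q b) := by
  simp [qBinom]

lemma qBinom_of_lt {q : ℝ} {i j : ℕ} (h : i < j) : qBinom q i j = 0 := by
  simp [qBinom, h]

lemma qBinom_zero_right {q : ℝ} (hq : 0 ≤ q) (i : ℕ) : qBinom q i 0 = 1 := by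
  simp [qBinom, qFact, (qFact_pos hq i).ne']

lemma qBinom_self {q : ℝ} (hq : 0 ≤ q) (i : ℕ) : qBinom q i i = 1 := by
  simp [qBinom, qFact, (qFact_pos hq i).ne']

lemma qBinom_succ_succ {q : ℝ} (hq : 0 ≤ q) (m k : ℕ) :
    qBinom q (m + 1) (k + 1) = qBinom q m k + q ^ (k + 1) * qBinom q m (k + 1) := by
  rcases lt_trichotomy k m with h | rfl | h
  · obtain ⟨b, rfl⟩ : ∃ b, m = k + 1 + b := ⟨m - (k + 1), by omega⟩
    have h₁ : qBinom q (k + 1 + b + 1) (k + 1) =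
        qFact q (k + 1 + (b + 1)) / (qFact q (k + 1) * qFact q (b + 1)) :=
      qBinom_add_left q (k + 1) (b + 1)
    have h₂ : qBinom q (k + 1 + b) k = qFact q (k + 1 + b) / (qFact q k * qFact q (b + 1)) := by
      rw [show k + 1 + b = k + (b + 1) by ring, qBinom_add_left]
    have hsplit : qFact q (k + 1 + (b + 1)) =
        (qInt q (k + 1) + q ^ (k + 1) * qInt q (b + 1)) * qFact q (k + 1 + b) := by
      rw [← qInt_add]
      rfl
    rw [h₁, h₂, qBinom_add_left, hsplit, qFact_succ q k, qFact_succ q b]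
    have := (qFact_pos hq k).ne'
    have := (qFact_pos hq b).ne'
    have := (qInt_succ_pos hq k).ne'
    have := (qInt_succ_pos hq b).ne'
    field_simp
  · rw [qBinom_self hq, qBinom_self hq, qBinom_of_lt (Nat.lt_succ_self k)]
    ring
  · rw [qBinom_of_lt (by omega), qBinom_of_lt (by omega), qBinom_of_lt (by omega)]
    ring

lemma choose_succ_add_succ (i j : ℕ) :
    (i + 1 + (j + 1)).choose (i + 1) = (i + (j + 1)).choose i + (i + 1 + j).choose (i + 1) := by
  rw [show i + (j + 1) = i + 1 + j by omega]
  exact Nat.choose_succ_succ' _ _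

-- Terms with a negative index are absent; the guards keep truncated subtraction out of them.
lemma triB_succ {q : ℝ} (hq : 0 ≤ q) (u v : ℝ) {m i j k : ℕ} (h : i + j + k = m + 1) :
    triB q (m + 1) i j k u v =
      (if 1 ≤ i then q ^ k * u * triB q m (i - 1) j k u v else 0) +
      (if 1 ≤ j then q ^ k * v * triB q m i (j - 1) k u v else 0) +
      (if 1 ≤ k then (1 - q ^ (k - 1) * u - q ^ (k - 1) * v) * triB q m i j (k - 1) u v
        else 0) := by
  rcases i with _ | i <;> rcases j with _ | j <;> rcases k with _ | k
  · omega
  · obtain rfl : k = m := by omega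
    simp [triB, prod_range_succ, qBinom_succ_succ hq, qBinom_of_lt (Nat.lt_succ_self k)]
    ring
  all_goals
    simp [triB, prod_range_succ, qBinom_succ_succ hq, qBinom_zero_right hq, choose_succ_add_succ]
    ring

lemma mem_simplex {n : ℕ} {p : ℕ × ℕ × ℕ} : p ∈ simplex n ↔ p.1 + p.2.1 + p.2.2 = n := by
  simp only [simplex, mem_filter, mem_product, mem_range]
  omega

lemma sum_simplex_shift {M : Type*} [AddCommMonoid M] (m a b c : ℕ) (habc : a + b + c = 1)
    (g : ℕ → ℕ → ℕ → M) :
    ∑ p ∈ simplex m, g (p.1 + a) (p.2.1 + b) (p.2.2 + c) =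
      ∑ p ∈ simplex (m + 1), if a ≤ p.1 ∧ b ≤ p.2.1 ∧ c ≤ p.2.2 then g p.1 p.2.1 p.2.2 else 0 := by
  rw [← sum_filter]
  refine sum_nbij' (fun p ↦ (p.1 + a, p.2.1 + b, p.2.2 + c))
    (fun p ↦ (p.1 - a, p.2.1 - b, p.2.2 - c)) ?_ ?_ ?_ ?_ fun _ _ ↦ rfl
  all_goals
    rintro ⟨i, j, k⟩
    simp only [mem_filter, mem_simplex, Prod.mk.injEq]
    omega

def deCasteljauStep (q u v : ℝ) (F : ℕ → ℕ → ℕ → ℝ) (i j k : ℕ) : ℝ :=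
  q ^ k * u * F (i + 1) j k + q ^ k * v * F i (j + 1) k +
    (1 - q ^ k * u - q ^ k * v) * F i j (k + 1)

noncomputable def qBezier (q : ℝ) (n : ℕ) (F : ℕ → ℕ → ℕ → ℝ) (u v : ℝ) : ℝ :=
  ∑ p ∈ simplex n, F p.1 p.2.1 p.2.2 * triB q n p.1 p.2.1 p.2.2 u v

lemma qBezier_congr {q : ℝ} {n : ℕ} {F G : ℕ → ℕ → ℕ → ℝ} (u v : ℝ)
    (h : ∀ i j k, i + j + k = n → F i j k = G i j k) : qBezier q n F u v = qBezier q n G u v :=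
  sum_congr rfl fun p hp ↦ by rw [h _ _ _ (mem_simplex.1 hp)]

lemma qBezier_zero (q : ℝ) (F : ℕ → ℕ → ℕ → ℝ) (u v : ℝ) : qBezier q 0 F u v = F 0 0 0 := by
  have : simplex 0 = {(0, 0, 0)} := by decide
  simp [qBezier, this, triB, qBinom, qFact]

lemma qBezier_deCasteljauStep {q : ℝ} (hq : 0 ≤ q) (u v : ℝ) (m : ℕ) (F : ℕ → ℕ → ℕ → ℝ) :
    qBezier q m (deCasteljauStep q u v F) u v = qBezier q (m + 1) F u v := by
  have hI := sum_simplex_shift m 1 0 0 rfl fun i j k ↦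
    q ^ k * u * F i j k * triB q m (i - 1) j k u v
  have hJ := sum_simplex_shift m 0 1 0 rfl fun i j k ↦
    q ^ k * v * F i j k * triB q m i (j - 1) k u v
  have hK := sum_simplex_shift m 0 0 1 rfl fun i j k ↦
    (1 - q ^ (k - 1) * u - q ^ (k - 1) * v) * F i j k * triB q m i j (k - 1) u v
  simp only [add_zero, Nat.add_sub_cancel, zero_le, true_and, and_true] at hI hJ hK
  simp only [qBezier, deCasteljauStep, add_mul, sum_add_distrib, hI, hJ, hK]
  rw [← sum_add_distrib, ← sum_add_distrib]
  refine sum_congr rfl fun p hp ↦ ?_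
  rw [triB_succ hq u v (mem_simplex.1 hp)]
  split_ifs <;> ring

theorem stmt2_general (q : ℝ) (hq0 : 0 < q) (n : ℕ)
    (b : ℕ → ℕ → ℕ → ℝ) (u v : ℝ)
    (f : ℕ → ℕ → ℕ → ℕ → ℝ)
    (hf0 : ∀ i j k, i + j + k = n → f 0 i j k = b i j k)
    (hfr : ∀ r i j k, r < n → i + j + k = n - (r + 1) →
      f (r + 1) i j k =
        q ^ k * u * f r (i + 1) j k + q ^ k * v * f r i (j + 1) k +
          (1 - q ^ k * u - q ^ k * v) * f r i j (k + 1)) :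
    ∑ p ∈ simplex n, b p.1 p.2.1 p.2.2 * triB q n p.1 p.2.1 p.2.2 u v = f n 0 0 0 := by
  change qBezier q n b u v = f n 0 0 0
  have invariant : ∀ r ≤ n, qBezier q n b u v = qBezier q (n - r) (f r) u v := by
    intro r hr
    induction r with
    | zero => exact qBezier_congr u v fun i j k h ↦ (hf0 i j k h).symm
    | succ r ih =>
      rw [ih (by omega), show n - r = n - (r + 1) + 1 by omega,
        ← qBezier_deCasteljauStep hq0.le]
      exact qBezier_congr u v fun i j k h ↦ (hfr r i j k hr h).symm
  simpa only [Nat.sub_self, qBezier_zero] using invariant n le_rfl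

/-- the de Casteljau type algorithm evaluates the q-Bézier polynomial. -/
theorem stmt2 (q : ℝ) (hq0 : 0 < q) (hq1 : q ≤ 1) (n : ℕ)
    (b : ℕ → ℕ → ℕ → ℝ) (u v : ℝ)
    (f : ℕ → ℕ → ℕ → ℕ → ℝ)
    (hf0 : ∀ i j k, i + j + k = n → f 0 i j k = b i j k)
    (hfr : ∀ r i j k, r < n → i + j + k = n - (r + 1) →
      f (r + 1) i j k =
        q ^ k * u * f r (i + 1) j k + q ^ k * v * f r i (j + 1) k +
          (1 - q ^ k * u - q ^ k * v) * f r i j (k + 1)) :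
    ∑ p ∈ simplex n, b p.1 p.2.1 p.2.2 * triB q n p.1 p.2.1 p.2.2 u v = f n 0 0 0 :=
  stmt2_general q hq0 n b u v f hf0 hfr
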